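/- (Failure of Bernstein's theorem in H₃: the hyperbolic paraboloid) The function f(x,y) = xy/2 satisfies the minimal surface equation of H₃, f_xx(1 + (f_y − x/2)²) − 2f_xy(f_x + y/2)(f_y − x/2) + f_yy(1 + (f_x + y/2)²) = 0, at every point of ℝ², but it does not satisfy the Euclidean minimal surface equation f_xx(1 + f_y²) − 2f_x f_y f_xy + f_yy(1 + f_x²) = 0 at any point (x,y) with xy ≠ 0. In particular z = xy/2 is an entire (complete) non-planar minimal graph in H₃. -/

import Mathlib

noncomputable section

/-- Partial derivative with respect to the first (x) variable. -/
def pdx (f : ℝ × ℝ → ℝ) : ℝ × ℝ → ℝ := fun p => fderiv ℝ f p (1, 0)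

/-- Partial derivative with respect to the second (y) variable. -/
def pdy (f : ℝ × ℝ → ℝ) : ℝ × ℝ → ℝ := fun p => fderiv ℝ f p (0, 1)

/-- `P = f_x + y/2`. -/
def Pf (f : ℝ × ℝ → ℝ) : ℝ × ℝ → ℝ := fun p => pdx f p + p.2 / 2

/-- `Q = f_y - x/2`. -/
def Qf (f : ℝ × ℝ → ℝ) : ℝ × ℝ → ℝ := fun p => pdy f p - p.1 / 2

/-- First fundamental form coefficient `E = 1 + P²`. -/
def Ef (f : ℝ × ℝ → ℝ) : ℝ × ℝ → ℝ := fun p => 1 + Pf f p ^ 2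

/-- First fundamental form coefficient `F = P·Q`. -/
def Ff (f : ℝ × ℝ → ℝ) : ℝ × ℝ → ℝ := fun p => Pf f p * Qf f p

/-- First fundamental form coefficient `G = 1 + Q²`. -/
def Gf (f : ℝ × ℝ → ℝ) : ℝ × ℝ → ℝ := fun p => 1 + Qf f p ^ 2

/-- `W = √(EG − F²) = √(1 + P² + Q²)`. -/
def Wf (f : ℝ × ℝ → ℝ) : ℝ × ℝ → ℝ := fun p => Real.sqrt (1 + Pf f p ^ 2 + Qf f p ^ 2)

/-- Second fundamental form coefficient `L = (f_xx + PQ)/W`. -/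
def Lf (f : ℝ × ℝ → ℝ) : ℝ × ℝ → ℝ := fun p => (pdx (pdx f) p + Pf f p * Qf f p) / Wf f p

/-- Second fundamental form coefficient `M = (f_xy + (Q² − P²)/2)/W`. -/
def Mf (f : ℝ × ℝ → ℝ) : ℝ × ℝ → ℝ :=
  fun p => (pdx (pdy f) p + (Qf f p ^ 2 - Pf f p ^ 2) / 2) / Wf f p

/-- Second fundamental form coefficient `N = (f_yy − PQ)/W`. -/
def Nf (f : ℝ × ℝ → ℝ) : ℝ × ℝ → ℝ := fun p => (pdy (pdy f) p - Pf f p * Qf f p) / Wf f p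

/-- Mean curvature `H = (EN − 2FM + GL)/(2W²)`. -/
def Hf (f : ℝ × ℝ → ℝ) : ℝ × ℝ → ℝ :=
  fun p => (Ef f p * Nf f p - 2 * Ff f p * Mf f p + Gf f p * Lf f p) / (2 * Wf f p ^ 2)

/-- The Laplace–Beltrami operator of the graph of `f`, with the sign convention
`Δφ = −(1/W)[∂_x((G φ_x − F φ_y)/W) + ∂_y((−F φ_x + E φ_y)/W)]`. -/
def lapS (f φ : ℝ × ℝ → ℝ) : ℝ × ℝ → ℝ := fun p =>
  -(1 / Wf f p) *
    (pdx (fun q => (Gf f q * pdx φ q - Ff f q * pdy φ q) / Wf f q) p +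
     pdy (fun q => (-(Ff f q) * pdx φ q + Ef f q * pdy φ q) / Wf f q) p)

/-- Mean curvature in the form `H = (f_xx + f_yy)/(2W³)`. -/
def Hm (f : ℝ × ℝ → ℝ) : ℝ × ℝ → ℝ :=
  fun p => (pdx (pdx f) p + pdy (pdy f) p) / (2 * Wf f p ^ 3)

/-- `H₁ = (f_xx + f_yy)/W`. -/
def H1f (f : ℝ × ℝ → ℝ) : ℝ × ℝ → ℝ :=
  fun p => (pdx (pdx f) p + pdy (pdy f) p) / Wf f p

/-- The hyperbolic paraboloid `z = xy/2`. -/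
def fhp : ℝ × ℝ → ℝ := fun p => p.1 * p.2 / 2

/-! For `f = xy/2` we have `f_xx = f_yy = 0` and `f_xy = 1/2`, so both equations reduce to their
mixed term. In `H₃` that term carries the factor `f_y − x/2`, which vanishes identically; in `E³`
it is `−2 f_x f_y f_xy = −xy/4`. -/

theorem pdx_eq_deriv {f : ℝ × ℝ → ℝ} {p : ℝ × ℝ} (hf : DifferentiableAt ℝ f p) :
    pdx f p = deriv (fun x => f (x, p.2)) p.1 :=
  (hf.hasFDerivAt.comp_hasDerivAt p.1
    ((hasDerivAt_id p.1).prodMk (hasDerivAt_const p.1 p.2))).deriv.symm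

theorem pdy_eq_deriv {f : ℝ × ℝ → ℝ} {p : ℝ × ℝ} (hf : DifferentiableAt ℝ f p) :
    pdy f p = deriv (fun y => f (p.1, y)) p.2 :=
  (hf.hasFDerivAt.comp_hasDerivAt p.2
    ((hasDerivAt_const p.2 p.1).prodMk (hasDerivAt_id p.2))).deriv.symm

theorem pdx_fhp : pdx fhp = fun p => p.2 / 2 := by
  funext p
  rw [pdx_eq_deriv (by unfold fhp; fun_prop)]
  simp [fhp]

theorem pdy_fhp : pdy fhp = fun p => p.1 / 2 := by
  funext p
  rw [pdy_eq_deriv (by unfold fhp; fun_prop)]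
  simp [fhp]

theorem pdx_pdx_fhp : pdx (pdx fhp) = 0 := by
  funext p
  rw [pdx_fhp, pdx_eq_deriv (by fun_prop)]
  simp

theorem pdy_pdy_fhp : pdy (pdy fhp) = 0 := by
  funext p
  rw [pdy_fhp, pdy_eq_deriv (by fun_prop)]
  simp

theorem pdx_pdy_fhp : pdx (pdy fhp) = fun _ => 1 / 2 := by
  funext p
  rw [pdy_fhp, pdx_eq_deriv (by fun_prop)]
  simp

theorem hyperbolic_paraboloid_minimal_in_heisenberg_not_euclidean :
    (∀ p : ℝ × ℝ,
      pdx (pdx fhp) p * (1 + (pdy fhp p - p.1 / 2) ^ 2) -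
          2 * pdx (pdy fhp) p * (pdx fhp p + p.2 / 2) * (pdy fhp p - p.1 / 2) +
          pdy (pdy fhp) p * (1 + (pdx fhp p + p.2 / 2) ^ 2) = 0) ∧
    (∀ p : ℝ × ℝ, p.1 * p.2 ≠ 0 →
      pdx (pdx fhp) p * (1 + pdy fhp p ^ 2) -
          2 * pdx fhp p * pdy fhp p * pdx (pdy fhp) p +
          pdy (pdy fhp) p * (1 + pdx fhp p ^ 2) ≠ 0) := by
  simp only [pdx_pdx_fhp, pdy_pdy_fhp, pdx_pdy_fhp, Pi.zero_apply]
  simp only [pdx_fhp, pdy_fhp]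
  refine ⟨fun p => by ring, fun p hp => ?_⟩
  have euclidean_eq : (0 : ℝ) * (1 + (p.1 / 2) ^ 2) - 2 * (p.2 / 2) * (p.1 / 2) * (1 / 2) +
      0 * (1 + (p.2 / 2) ^ 2) = -(p.1 * p.2) / 4 := by ring
  rw [euclidean_eq]
  exact div_ne_zero (neg_ne_zero.mpr hp) four_ne_zero
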